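/- arXiv:1705.08987 — 3 statements merged into one kernel-verified Lean document; each statement's English description precedes it below -/
import Mathlib

section
/- Let V be an N×N complex matrix and let g : ℂ^N → ℂ be permutation invariant. Assume g(v_{f,i}) ≠ 0 for every i = 1,…,N. Then for every N×N permutation matrix P and every λ ∈ ℂ^N, the reordering condition holds: h(λ, PV) = P ·ह(λ, V), i.e., h(λ, PV) = P h(λ, V). (Note that the columns of (PV)^H = V^H P^T are a permutation of the columns of V^H, so h(·, PV) is also defined.) -/
open Matrix

/-- `g : ℂ^N → ℂ` is permutation invariant if `g (P x) = g x` for every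
permutation matrix `P` and every `x`. -/
def PermInvariant (N : ℕ) (g : (Fin N → ℂ) → ℂ) : Prop :=
  ∀ (σ : Equiv.Perm (Fin N)) (x : Fin N → ℂ), g ((σ.permMatrix ℂ).mulVec x) = g x

/-- `colDiag g V = diag (g v_1, …, g v_N)` where `v_i` are the columns of `V`. -/
def colDiag (N : ℕ) (g : (Fin N → ℂ) → ℂ) (V : Matrix (Fin N) (Fin N) ℂ) :
    Matrix (Fin N) (Fin N) ℂ :=
  Matrix.diagonal fun i => g fun j => V j i

/-- The eigenvalue map `h(λ, V) = D_f⁻¹ V D λ`, where `D = diag(g(v_i))` with `v_i`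
the columns of `V`, and `D_f = diag(g(v_{f,i}))` with `v_{f,i}` the columns of `Vᴴ`. -/
noncomputable def hMap (N : ℕ) (g : (Fin N → ℂ) → ℂ) (V : Matrix (Fin N) (Fin N) ℂ)
    (lam : Fin N → ℂ) : Fin N → ℂ :=
  ((colDiag N g Vᴴ)⁻¹ * V * colDiag N g V).mulVec lam

lemma permMatrix_mulVec' {N : ℕ} (σ : Equiv.Perm (Fin N)) (x : Fin N → ℂ) :
    (σ.permMatrix ℂ).mulVec x = fun j => x (σ j) := by
  funext j
  simp [Equiv.Perm.permMatrix, mulVec, dotProduct, PEquiv.toMatrix_apply,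
    Equiv.toPEquiv_apply]

lemma permMatrix_apply {N : ℕ} (σ : Equiv.Perm (Fin N)) (j i : Fin N) :
    σ.permMatrix ℂ j i = if σ j = i then 1 else 0 := by
  simp [Equiv.Perm.permMatrix, PEquiv.toMatrix_apply, Equiv.toPEquiv_apply, eq_comm]

lemma diag_inv {N : ℕ} (e : Fin N → ℂ) (he : ∀ i, e i ≠ 0) :
    (diagonal e)⁻¹ = diagonal (fun i => (e i)⁻¹) := by
  apply inv_eq_right_inv
  rw [diagonal_mul_diagonal]
  have : (fun i => e i * (e i)⁻¹) = fun _ => (1 : ℂ) :=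
    funext fun i => mul_inv_cancel₀ (he i)
  rw [this, diagonal_one]


/-- Axiom of Reordering (A2): `h(λ, P V) = P h(λ, V)`. -/
theorem reordering_axiom (N : ℕ) (hN : 1 ≤ N) (V : Matrix (Fin N) (Fin N) ℂ)
    (g : (Fin N → ℂ) → ℂ) (hg : PermInvariant N g)
    (hDf : ∀ i, g (fun j => Vᴴ j i) ≠ 0) :
    ∀ (σ : Equiv.Perm (Fin N)) (lam : Fin N → ℂ),
      hMap N g (σ.permMatrix ℂ * V) lam = (σ.permMatrix ℂ).mulVec (hMap N g V lam) := by
  intro σ lam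
  set P := σ.permMatrix ℂ with hP
  set d : Fin N → ℂ := fun i => g (fun j => Vᴴ j i) with hd
  have hPV : ∀ j i, (P * V) j i = V (σ j) i := by
    intro j i
    simp [hP, mul_apply, Equiv.Perm.permMatrix, PEquiv.toMatrix_apply,
      Equiv.toPEquiv_apply, Finset.sum_ite_eq]
  -- D unchanged
  have hD : colDiag N g (P * V) = colDiag N g V := by
    unfold colDiag
    have hcol : (fun i => g fun j => (P * V) j i) = fun i => g fun j => V j i := by
      funext i
      have h2 := hg σ (fun j => V j i)
      rw [permMatrix_mulVec'] at h2
      calc (g fun j => (P * V) j i) = g fun j => V (σ j) i := by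
            congr 1; funext j; exact hPV j i
        _ = _ := h2
    rw [hcol]
  -- D_f permuted
  have hDfP : colDiag N g (P * V)ᴴ = diagonal (fun i => d (σ i)) := by
    unfold colDiag
    have hcol : (fun i => g fun j => (P * V)ᴴ j i) = fun i => d (σ i) := by
      funext i
      have : (fun j => (P * V)ᴴ j i) = fun j => Vᴴ j (σ i) := by
        funext j
        simp [conjTranspose_apply, hPV]
      rw [this]
    rw [hcol]
  have hinv : (diagonal fun i => d (σ i))⁻¹ = diagonal fun i => (d (σ i))⁻¹ :=
    diag_inv _ (fun i => hDf (σ i))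
  have hinv2 : (colDiag N g Vᴴ)⁻¹ = diagonal fun i => (d i)⁻¹ :=
    diag_inv _ hDf
  have hcomm : (diagonal fun i => (d (σ i))⁻¹) * P = P * diagonal fun i => (d i)⁻¹ := by
    ext j i
    simp only [diagonal_mul, mul_diagonal, permMatrix_apply, hP]
    by_cases h : σ j = i
    · subst h; simp [mul_comm]
    · simp [h]
  unfold hMap
  rw [hDfP, hD, hinv, ← Matrix.mul_assoc _ P V, hcomm, hinv2,
    Matrix.mul_assoc P, Matrix.mul_assoc P, ← mulVec_mulVec]
end

section
/- Let V be an N×N complex matrix and let g : ℂ^N → ℂ be permutation invariant. Assume g(v_{f,i}) ≠ 0 for every i = 1,…,N. Then for every N×N permutation matrix P and every λ ∈ ℂ^N, the permutation condition holds: h(P^T λ, V P) = h(λ, V). (Note that the columns of (VP)^H = P^T V^H are the columns of V^H each multiplied by P^T, and g is permutation invariant, so h(·, VP) is also defined.) -/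
open Matrix

/-!
Right multiplication by a permutation matrix `P` permutes the columns of `V`, so
`D(VP) = Pᵀ D(V) P`, and `P Pᵀ = 1` gives `V P D(VP) Pᵀ = V D(V)`. The columns of
`(VP)ᴴ = Pᵀ Vᴴ` are permutations of the columns of `Vᴴ`, so permutation invariance of `g`
leaves `D_f` unchanged.
-/

namespace Matrix

variable {n R : Type*} [DecidableEq n] [Fintype n]

theorem permMatrix_mul_transpose_permMatrix [NonAssocSemiring R] (σ : Equiv.Perm n) :
    σ.permMatrix R * (σ.permMatrix R)ᵀ = 1 := by
  rw [transpose_permMatrix, ← permMatrix_mul, inv_mul_cancel, permMatrix_one]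

theorem transpose_permMatrix_mul_diagonal_mul_permMatrix [NonAssocSemiring R]
    (σ : Equiv.Perm n) (d : n → R) :
    (σ.permMatrix R)ᵀ * diagonal d * σ.permMatrix R = diagonal (d ∘ σ.symm) := by
  rw [transpose_permMatrix, PEquiv.toMatrix_toPEquiv_mul, PEquiv.mul_toMatrix_toPEquiv,
    submatrix_submatrix, Function.comp_id, Function.id_comp, Equiv.Perm.inv_def,
    submatrix_diagonal_equiv]

end Matrix

section

variable {N : ℕ} {g : (Fin N → ℂ) → ℂ} (V : Matrix (Fin N) (Fin N) ℂ) (σ : Equiv.Perm (Fin N))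

theorem colDiag_mul_permMatrix :
    colDiag N g (V * σ.permMatrix ℂ) = (σ.permMatrix ℂ)ᵀ * colDiag N g V * σ.permMatrix ℂ := by
  rw [colDiag, colDiag, transpose_permMatrix_mul_diagonal_mul_permMatrix,
    PEquiv.mul_toMatrix_toPEquiv]
  rfl

theorem colDiag_conjTranspose_mul_permMatrix (hg : PermInvariant N g) :
    colDiag N g (V * σ.permMatrix ℂ)ᴴ = colDiag N g Vᴴ := by
  refine congrArg diagonal (funext fun i => ?_)
  rw [conjTranspose_mul, conjTranspose_permMatrix, ← hg σ⁻¹ (fun j => Vᴴ j i),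
    PEquiv.toMatrix_toPEquiv_mul, permMatrix_mulVec]
  rfl

end

theorem permutation_axiom_general (N : ℕ) (V : Matrix (Fin N) (Fin N) ℂ)
    (g : (Fin N → ℂ) → ℂ) (hg : PermInvariant N g) :
    ∀ (σ : Equiv.Perm (Fin N)) (lam : Fin N → ℂ),
      hMap N g (V * σ.permMatrix ℂ) ((σ.permMatrix ℂ)ᵀ.mulVec lam) = hMap N g V lam := by
  intro σ lam
  have hP : σ.permMatrix ℂ * (σ.permMatrix ℂ)ᵀ = 1 := permMatrix_mul_transpose_permMatrix σ
  rw [hMap, hMap, colDiag_conjTranspose_mul_permMatrix V σ hg, colDiag_mul_permMatrix,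
    mulVec_mulVec]
  congr 1
  calc _ = (colDiag N g Vᴴ)⁻¹ * V * (σ.permMatrix ℂ * (σ.permMatrix ℂ)ᵀ) * colDiag N g V *
        (σ.permMatrix ℂ * (σ.permMatrix ℂ)ᵀ) := by simp only [Matrix.mul_assoc]
    _ = _ := by rw [hP, Matrix.mul_one, Matrix.mul_one]

/-- Axiom of Permutation (A3): `h(Pᵀ λ, V P) = h(λ, V)`. -/
theorem permutation_axiom (N : ℕ) (hN : 1 ≤ N) (V : Matrix (Fin N) (Fin N) ℂ)
    (g : (Fin N → ℂ) → ℂ) (hg : PermInvariant N g)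
    (hDf : ∀ i, g (fun j => Vᴴ j i) ≠ 0) :
    ∀ (σ : Equiv.Perm (Fin N)) (lam : Fin N → ℂ),
      hMap N g (V * σ.permMatrix ℂ) ((σ.permMatrix ℂ)ᵀ.mulVec lam) = hMap N g V lam :=
  permutation_axiom_general N V g hg
end

section
/- Let V be an N×N complex unitary matrix and let λ_f ∈ ℂ^N have pairwise distinct entries. Define the dual shift S_f = V^H diag(λ_f) V. Then for every window vector w ∈ ℂ^N there exist coefficients h_{f,0}, …, h_{f,N−1} ∈ ℂ such that V^H diag(w) V = Σ_{l=0}^{N−1} h_{f,l} (S_f)^l. Consequently, for every graph signal x ∈ ℂ^N, the GFT of the windowed signal diag(w)x equals the polynomial filter in S_f applied to the GFT of x: V^H (diag(w) x) = (Σ_{l=0}^{N−1} h_{f,l} (S_f)^l) (V^H x). -/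
/-!
Lagrange interpolation gives a polynomial `p` of degree `< N` with `p(λ_f i) = w i`, so that
`diag w = p(diag λ_f)`. Conjugation by the unitary `V` is an algebra automorphism, hence it
commutes with polynomial evaluation: `Vᴴ diag(w) V = p(Vᴴ diag(λ_f) V) = p(S_f)`.
-/

open Matrix Polynomial

theorem Lagrange.exists_degree_lt_card_forall_eval_eq {F ι : Type*} [Field F] [Fintype ι]
    [DecidableEq ι] {v : ι → F} (hv : Function.Injective v) (r : ι → F) :
    ∃ p : F[X], p.degree < Fintype.card ι ∧ ∀ i, p.eval (v i) = r i :=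
  ⟨Lagrange.interpolate Finset.univ v r, Lagrange.degree_interpolate_lt _ hv.injOn,
    fun i => Lagrange.eval_interpolate_at_node r hv.injOn (Finset.mem_univ i)⟩

theorem Polynomial.aeval_eq_sum_range_of_degree_lt {R A : Type*} [CommSemiring R] [Semiring A]
    [Algebra R A] {p : R[X]} {n : ℕ} (hp : p.degree < n) (x : A) :
    aeval x p = ∑ l ∈ Finset.range n, p.coeff l • x ^ l := by
  rcases eq_or_ne p 0 with rfl | hp0
  · simp
  · exact aeval_eq_sum_range' ((natDegree_lt_iff_degree_lt hp0).mpr hp) x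

theorem Matrix.aeval_diagonal {R n : Type*} [CommSemiring R] [Fintype n] [DecidableEq n]
    (d : n → R) (p : R[X]) :
    aeval (diagonal d) p = diagonal fun i => p.eval (d i) := by
  rw [← diagonalAlgHom_apply (R := R), aeval_algHom_apply, aeval_pi_apply]
  rfl

theorem Unitary.aeval_star_mul_mul {S R : Type*} [CommSemiring S] [Semiring R] [StarMul R]
    [Algebra S R] {u : R} (hu : u ∈ unitary R) (x : R) (p : S[X]) :
    aeval (star u * x * u) p = star u * aeval x p * u := by
  simpa using aeval_algHom_apply (conjStarAlgAut S R (star ⟨u, hu⟩)) x p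

theorem Matrix.conjTranspose_mulVec_mulVec_of_mem_unitary {n α : Type*} [Fintype n]
    [DecidableEq n] [CommSemiring α] [StarRing α] {V : Matrix n n α} (hV : V ∈ unitary _)
    (A : Matrix n n α) (x : n → α) :
    Vᴴ *ᵥ (A *ᵥ x) = (Vᴴ * A * V) *ᵥ (Vᴴ *ᵥ x) := by
  rw [mulVec_mulVec, mulVec_mulVec, Matrix.mul_assoc _ V, ← star_eq_conjTranspose,
    Unitary.mul_star_self_of_mem hV, Matrix.mul_one]

theorem windowing_is_dual_filtering_general (N : ℕ)
    (V : Matrix (Fin N) (Fin N) ℂ) (hV : Vᴴ * V = 1)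
    (lamf : Fin N → ℂ) (hdist : ∀ i j : Fin N, i ≠ j → lamf i ≠ lamf j)
    (Sf : Matrix (Fin N) (Fin N) ℂ) (hSf : Sf = Vᴴ * Matrix.diagonal lamf * V) :
    ∀ w : Fin N → ℂ, ∃ hf : ℕ → ℂ,
      Vᴴ * Matrix.diagonal w * V = ∑ l ∈ Finset.range N, hf l • Sf ^ l ∧
      ∀ x : Fin N → ℂ,
        Vᴴ.mulVec ((Matrix.diagonal w).mulVec x) =
          (∑ l ∈ Finset.range N, hf l • Sf ^ l).mulVec (Vᴴ.mulVec x) := by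
  intro w
  have hVu : V ∈ unitary _ := mem_unitaryGroup_iff'.mpr hV
  have hinj : Function.Injective lamf := fun i j h => not_imp_not.mp (hdist i j) h
  obtain ⟨p, hdeg, hp⟩ := Lagrange.exists_degree_lt_card_forall_eval_eq hinj w
  have hfilter : Vᴴ * diagonal w * V = ∑ l ∈ Finset.range N, p.coeff l • Sf ^ l := by
    rw [← aeval_eq_sum_range_of_degree_lt (by simpa using hdeg), hSf, ← star_eq_conjTranspose,
      Unitary.aeval_star_mul_mul hVu, aeval_diagonal, funext hp]
  refine ⟨p.coeff, hfilter, fun x => ?_⟩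
  rw [← hfilter]
  exact conjTranspose_mulVec_mulVec_of_mem_unitary hVu _ x

/-- Corollary 1: windowing in the vertex domain is filtering with a polynomial
of the dual shift `S_f = Vᴴ diag(λ_f) V` in the frequency domain. -/
theorem windowing_is_dual_filtering (N : ℕ) (hN : 1 ≤ N)
    (V : Matrix (Fin N) (Fin N) ℂ) (hV : Vᴴ * V = 1)
    (lamf : Fin N → ℂ) (hdist : ∀ i j : Fin N, i ≠ j → lamf i ≠ lamf j)
    (Sf : Matrix (Fin N) (Fin N) ℂ) (hSf : Sf = Vᴴ * Matrix.diagonal lamf * V) :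
    ∀ w : Fin N → ℂ, ∃ hf : ℕ → ℂ,
      Vᴴ * Matrix.diagonal w * V = ∑ l ∈ Finset.range N, hf l • Sf ^ l ∧
      ∀ x : Fin N → ℂ,
        Vᴴ.mulVec ((Matrix.diagonal w).mulVec x) =
          (∑ l ∈ Finset.range N, hf l • Sf ^ l).mulVec (Vᴴ.mulVec x) :=
  windowing_is_dual_filtering_general N V hV lamf hdist Sf hSf
end
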